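/- Let H be a Hamiltonian on ℂ^D whose spectrum has non-degenerate gaps, with orthonormal eigenbasis |j⟩, and let A, B be operators with ‖A‖, ‖B‖ ≤ 1. Then the late-time OTOC lim_{τ→∞}(1/τ)∫_0^τ tr(A†(t)B†A(t)B)/D dt equals (1/D) Σ_{j,k} (A†)_{jj}(B†)_{jk}A_{kk}B_{kj} + (1/D) Σ_{j≠k} (A†)_{jk}(B†)_{kk}A_{kj}B_{jj}, and its absolute value is at most (2/D)(Σ_j |A_{jj}|² + Σ_j |B_{jj}|²)^{1/2} · (constants), in particular at most 2·max((1/D)Σ_j|A_{jj}|², (1/D)Σ_j|B_{jj}|²)^{1/2} up to norm factors. -/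

import Mathlib

/-!
In the eigenbasis of `H` the OTOC at time `t` is the finite sum
`Σ_{jklm} (A†)_{jk} (B†)_{kl} A_{lm} B_{mj} e^{it(E_j - E_k + E_l - E_m)}`, and the Cesàro mean of
`e^{itθ}` tends to `1` if `θ = 0` and to `0` otherwise. Non-degenerate gaps leave exactly the
resonant quadruples `j = k, l = m` and `j ≠ k, l = k, m = j`. Each of the two surviving sums is
bounded by `Σ_j |A_{jj}|²` (resp. `Σ_j |B_{jj}|²`) via `|x y| ≤ (x² + y²)/2`, because every row and
column of a contraction has squared norm at most `1`.
-/

open Filter Matrix Complex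

theorem tendsto_cesaro_exp_I_mul (θ : ℝ) :
    Tendsto (fun τ : ℝ => (τ : ℂ)⁻¹ * ∫ t in (0:ℝ)..τ, cexp (I * θ * t))
      atTop (nhds (if θ = 0 then 1 else 0)) := by
  split_ifs with hθ
  · subst hθ
    refine tendsto_const_nhds.congr' ?_
    filter_upwards [eventually_ne_atTop 0] with τ hτ
    simp [hτ]
  · have hc : I * θ ≠ 0 := by simp [hθ]
    have hbdd (τ : ℝ) : ‖∫ t in (0:ℝ)..τ, cexp (I * θ * t)‖ ≤ 2 / ‖I * θ‖ := by
      rw [integral_exp_mul_complex hc, norm_div]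
      gcongr
      calc ‖cexp (I * θ * τ) - cexp (I * θ * (0:ℝ))‖ ≤ 1 + 1 := by
            refine (norm_sub_le _ _).trans (add_le_add ?_ ?_) <;> simp [norm_exp]
        _ = 2 := by norm_num
    have hinv : Tendsto (fun τ : ℝ => (τ : ℂ)⁻¹) atTop (nhds 0) := by
      simpa [Function.comp_def] using (continuous_ofReal.tendsto 0).comp tendsto_inv_atTop_zero
    exact hinv.zero_mul_isBoundedUnder_le ⟨_, eventually_map.2 (Eventually.of_forall hbdd)⟩

theorem tendsto_cesaro_sum_exp_I_mul {ι : Type*} [Fintype ι] (c : ι → ℂ) (θ : ι → ℝ) :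
    Tendsto (fun τ : ℝ => (τ : ℂ)⁻¹ * ∫ t in (0:ℝ)..τ, ∑ i, c i * cexp (I * θ i * t)) atTop
      (nhds (∑ i, if θ i = 0 then c i else 0)) := by
  have hint (τ : ℝ) : (∫ t in (0:ℝ)..τ, ∑ i, c i * cexp (I * θ i * t)) =
      ∑ i, c i * ∫ t in (0:ℝ)..τ, cexp (I * θ i * t) := by
    rw [intervalIntegral.integral_finsetSum fun i _ => by
      exact (continuous_const.mul (by fun_prop)).intervalIntegrable _ _]
    simp only [intervalIntegral.integral_const_mul]
  simp only [hint, Finset.mul_sum, mul_left_comm _ (c _)]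
  refine tendsto_finsetSum _ fun i _ => ?_
  simpa using (tendsto_cesaro_exp_I_mul (θ i)).const_mul (c i)

section Resonance

variable {n : Type*}

def HasNondegenerateGaps (E : n → ℝ) : Prop :=
  ∀ j k j' k' : n, j ≠ k → E j - E k = E j' - E k' → j = j' ∧ k = k'

theorem HasNondegenerateGaps.injective {E : n → ℝ} (hgap : HasNondegenerateGaps E) :
    Function.Injective E := by
  intro l m h
  by_contra hlm
  exact hlm (hgap l m l l hlm (by rw [h, sub_self])).2.symm

theorem HasNondegenerateGaps.resonance_iff {E : n → ℝ} (hgap : HasNondegenerateGaps E)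
    (j k l m : n) :
    E j - E k + E l - E m = 0 ↔ (j = k ∧ l = m) ∨ (j ≠ k ∧ l = k ∧ m = j) := by
  constructor
  · intro h
    by_cases hjk : j = k
    · subst hjk
      exact Or.inl ⟨rfl, hgap.injective (by linarith)⟩
    · obtain ⟨rfl, rfl⟩ := hgap j k m l hjk (by linarith)
      exact Or.inr ⟨hjk, rfl, rfl⟩
  · rintro (⟨rfl, rfl⟩ | ⟨-, rfl, rfl⟩) <;> ring

theorem HasNondegenerateGaps.sum_ite_resonance_eq [Fintype n] [DecidableEq n] {M : Type*}
    [AddCommMonoid M] {E : n → ℝ} (hgap : HasNondegenerateGaps E) (f : n → n → n → n → M) :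
    ∑ j, ∑ k, ∑ l, ∑ m, (if E j - E k + E l - E m = 0 then f j k l m else 0) =
      ∑ j, ∑ l, f j j l l + ∑ j, ∑ k, if j ≠ k then f j k k j else 0 := by
  have hsplit (j k l m : n) : (if E j - E k + E l - E m = 0 then f j k l m else 0) =
      (if j = k then if l = m then f j k l m else 0 else 0) +
        if j ≠ k then if l = k then if m = j then f j k l m else 0 else 0 else 0 := by
    rw [if_congr (hgap.resonance_iff j k l m) rfl rfl]
    by_cases hjk : j = k <;> simp [hjk, ite_and]
  simp only [hsplit, Finset.sum_add_distrib, Finset.sum_ite_irrel, Finset.sum_ite_eq,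
    Finset.sum_ite_eq', Finset.mem_univ, if_true, Finset.sum_const_zero]

end Resonance

section Eigenbasis

theorem Matrix.trace_mul_mul_mul {n R : Type*} [Fintype n] [Semiring R]
    (A B C F : Matrix n n R) :
    (A * B * C * F).trace = ∑ j, ∑ k, ∑ l, ∑ m, A j k * B k l * C l m * F m j := by
  simp only [trace, diag_apply, mul_apply, Finset.mul_sum, mul_assoc]

variable {n : Type*} [Fintype n] [DecidableEq n]

theorem exp_smul_unitary_conj_diagonal (U : unitaryGroup n ℂ) (c : ℂ) (d : n → ℂ) :
    NormedSpace.exp (c • ((U : Matrix n n ℂ) * diagonal d * star (U : Matrix n n ℂ))) =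
      U * diagonal (fun j => cexp (c * d j)) * star (U : Matrix n n ℂ) := by
  have hconj := Matrix.exp_units_conj (Unitary.toUnits U) (diagonal (c • d))
  simp only [Unitary.val_toUnits_apply, Unitary.val_inv_toUnits_apply,
    UnitaryGroup.inv_val] at hconj
  rw [← smul_mul_assoc, ← mul_smul_comm, ← diagonal_smul, hconj, exp_diagonal]
  congr 3
  ext j
  simp [Complex.exp_eq_exp_ℂ]

theorem trace_otoc_eq_sum (U : unitaryGroup n ℂ) (E : n → ℝ) (A B : Matrix n n ℂ) (t : ℝ) :
    let H : Matrix n n ℂ := U * diagonal (fun j => (E j : ℂ)) * star (U : Matrix n n ℂ)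
    let A' : Matrix n n ℂ := star (U : Matrix n n ℂ) * A * U
    let B' : Matrix n n ℂ := star (U : Matrix n n ℂ) * B * U
    (NormedSpace.exp ((I * t) • H) * Aᴴ * NormedSpace.exp ((-(I * t)) • H) * Bᴴ *
        (NormedSpace.exp ((I * t) • H) * A * NormedSpace.exp ((-(I * t)) • H)) * B).trace =
      ∑ j, ∑ k, ∑ l, ∑ m, A'ᴴ j k * B'ᴴ k l * A' l m * B' m j *
        cexp (I * (E j - E k + E l - E m : ℝ) * t) := by
  intro H A' B'
  have hUU : (U : Matrix n n ℂ) * star (U : Matrix n n ℂ) = 1 := U.2.2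
  simp only [H, exp_smul_unitary_conj_diagonal]
  set P := diagonal fun j => cexp (I * t * E j)
  set Q := diagonal fun j => cexp (-(I * t) * E j)
  have hconj : (U : Matrix n n ℂ) * P * star (U : Matrix n n ℂ) * Aᴴ *
      (U * Q * star (U : Matrix n n ℂ)) * Bᴴ *
      (U * P * star (U : Matrix n n ℂ) * A * (U * Q * star (U : Matrix n n ℂ))) * B =
      U * ((P * A'ᴴ * Q) * B'ᴴ * (P * A' * Q) * B') * star (U : Matrix n n ℂ) := by
    simp only [A', B', ← star_eq_conjTranspose, star_mul, star_star, Matrix.mul_assoc, hUU,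
      Matrix.mul_one]
  rw [hconj, trace_mul_cycle, U.2.1, Matrix.one_mul, trace_mul_mul_mul]
  simp only [P, Q, mul_diagonal, diagonal_mul]
  refine Finset.sum_congr rfl fun j _ => Finset.sum_congr rfl fun k _ =>
    Finset.sum_congr rfl fun l _ => Finset.sum_congr rfl fun m _ => ?_
  have hexp : cexp (I * (E j - E k + E l - E m : ℝ) * t) = cexp (I * t * E j) *
      cexp (-(I * t) * E k) * cexp (I * t * E l) * cexp (-(I * t) * E m) := by
    simp only [← Complex.exp_add]; push_cast; ring_nf
  rw [hexp]; ring

theorem tendsto_cesaro_trace_otoc (U : unitaryGroup n ℂ) {E : n → ℝ}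
    (hgap : HasNondegenerateGaps E) (A B : Matrix n n ℂ) :
    let H : Matrix n n ℂ := U * diagonal (fun j => (E j : ℂ)) * star (U : Matrix n n ℂ)
    let A' : Matrix n n ℂ := star (U : Matrix n n ℂ) * A * U
    let B' : Matrix n n ℂ := star (U : Matrix n n ℂ) * B * U
    Tendsto (fun τ : ℝ => (τ : ℂ)⁻¹ * ∫ t in (0:ℝ)..τ,
        (NormedSpace.exp ((I * t) • H) * Aᴴ * NormedSpace.exp ((-(I * t)) • H) * Bᴴ *
          (NormedSpace.exp ((I * t) • H) * A * NormedSpace.exp ((-(I * t)) • H)) * B).trace)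
      atTop (nhds (∑ j, ∑ k, A'ᴴ j j * B'ᴴ j k * A' k k * B' k j +
        ∑ j, ∑ k, if j ≠ k then A'ᴴ j k * B'ᴴ k k * A' k j * B' j j else 0)) := by
  intro H A' B'
  have hmean := tendsto_cesaro_sum_exp_I_mul
    (fun p : n × n × n × n => A'ᴴ p.1 p.2.1 * B'ᴴ p.2.1 p.2.2.1 * A' p.2.2.1 p.2.2.2 * B' p.2.2.2 p.1)
    (fun p => E p.1 - E p.2.1 + E p.2.2.1 - E p.2.2.2)
  simp only [Fintype.sum_prod_type] at hmean
  rw [hgap.sum_ite_resonance_eq] at hmean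
  refine hmean.congr fun τ => ?_
  congr 1
  refine intervalIntegral.integral_congr fun t _ => ?_
  exact (trace_otoc_eq_sum U E A B t).symm

end Eigenbasis
theorem sum_mul_mul_le_sum_sq {n : Type*} [Fintype n] (a : n → ℝ) (w : n → n → ℝ)
    (hw : ∀ j k, 0 ≤ w j k) (hrow : ∀ j, ∑ k, w j k ≤ 1) (hcol : ∀ k, ∑ j, w j k ≤ 1) :
    ∑ j, ∑ k, a j * a k * w j k ≤ ∑ j, a j ^ 2 := by
  have hamgm (j k : n) : a j * a k * w j k ≤ a j ^ 2 / 2 * w j k + a k ^ 2 / 2 * w j k := by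
    nlinarith [mul_nonneg (sq_nonneg (a j - a k)) (hw j k)]
  have hrows : ∑ j, ∑ k, a j ^ 2 / 2 * w j k ≤ ∑ j, a j ^ 2 / 2 := by
    refine Finset.sum_le_sum fun j _ => ?_
    rw [← Finset.mul_sum]
    exact mul_le_of_le_one_right (by positivity) (hrow j)
  have hcols : ∑ j, ∑ k, a k ^ 2 / 2 * w j k ≤ ∑ k, a k ^ 2 / 2 := by
    rw [Finset.sum_comm]
    refine Finset.sum_le_sum fun k _ => ?_
    rw [← Finset.mul_sum]
    exact mul_le_of_le_one_right (by positivity) (hcol k)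
  calc ∑ j, ∑ k, a j * a k * w j k
      ≤ ∑ j, ∑ k, (a j ^ 2 / 2 * w j k + a k ^ 2 / 2 * w j k) :=
        Finset.sum_le_sum fun j _ => Finset.sum_le_sum fun k _ => hamgm j k
    _ ≤ ∑ j, a j ^ 2 / 2 + ∑ k, a k ^ 2 / 2 := by
        simp only [Finset.sum_add_distrib]; exact add_le_add hrows hcols
    _ = ∑ j, a j ^ 2 := by rw [← Finset.sum_add_distrib]; simp

theorem add_le_two_mul_sqrt_max {x y : ℝ} (hx : x ≤ 1) (hy : y ≤ 1) :
    x + y ≤ 2 * √(max x y) := by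
  have : max x y ≤ √(max x y) := Real.le_sqrt_self_iff.2 (max_le hx hy)
  linarith [le_max_left x y, le_max_right x y]

section L2OpNorm

open scoped Matrix.Norms.L2Operator

variable {𝕜 m n : Type*} [RCLike 𝕜] [Fintype m] [Fintype n] [DecidableEq n]

theorem Matrix.sum_norm_sq_col_le_l2_opNorm_sq (M : Matrix m n 𝕜) (j : n) :
    ∑ i, ‖M i j‖ ^ 2 ≤ ‖M‖ ^ 2 := by
  have h := M.l2_opNorm_mulVec (EuclideanSpace.single j 1)
  rw [PiLp.norm_single, norm_one, mul_one] at h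
  calc ∑ i, ‖M i j‖ ^ 2
      = ‖(EuclideanSpace.equiv m 𝕜).symm (M *ᵥ EuclideanSpace.single j 1)‖ ^ 2 := by
        simp [EuclideanSpace.norm_sq_eq, mulVec_single]
    _ ≤ ‖M‖ ^ 2 := by gcongr

theorem Matrix.sum_norm_sq_row_le_l2_opNorm_sq [DecidableEq m] (M : Matrix m n 𝕜) (i : m) :
    ∑ j, ‖M i j‖ ^ 2 ≤ ‖M‖ ^ 2 := by
  simpa [l2_opNorm_conjTranspose] using Mᴴ.sum_norm_sq_col_le_l2_opNorm_sq i

theorem Matrix.l2_opNorm_star_mul_mul_unitary (U : unitaryGroup n 𝕜) (M : Matrix n n 𝕜) :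
    ‖star (U : Matrix n n 𝕜) * M * U‖ = ‖M‖ := by
  rw [CStarRing.norm_mul_coe_unitary, ← Unitary.coe_star, CStarRing.norm_coe_unitary_mul]

theorem Matrix.average_norm_sq_diag_le_one (M : Matrix n n 𝕜) (hM : ‖M‖ ≤ 1) :
    (1 / (Fintype.card n : ℝ)) * ∑ j, ‖M j j‖ ^ 2 ≤ 1 := by
  have hM2 : ‖M‖ ^ 2 ≤ 1 := pow_le_one₀ (norm_nonneg M) hM
  have hsum : ∑ j, ‖M j j‖ ^ 2 ≤ Fintype.card n := by
    calc ∑ j, ‖M j j‖ ^ 2 ≤ ∑ _j : n, (1 : ℝ) := Finset.sum_le_sum fun j _ =>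
          (Finset.single_le_sum (f := fun i => ‖M i j‖ ^ 2) (fun _ _ => by positivity)
            (Finset.mem_univ j)).trans ((M.sum_norm_sq_col_le_l2_opNorm_sq j).trans hM2)
      _ = Fintype.card n := by simp
  rcases (Fintype.card n).eq_zero_or_pos with hn | hn
  · simp [hn]
  · rw [one_div_mul_eq_div, div_le_one (by exact_mod_cast hn)]
    exact hsum

theorem Matrix.sum_norm_diag_mul_norm_sq_le (M N : Matrix n n 𝕜) (hN : ‖N‖ ≤ 1) :
    ∑ j, ∑ k, ‖M j j‖ * ‖M k k‖ * ‖N k j‖ ^ 2 ≤ ∑ j, ‖M j j‖ ^ 2 := by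
  have hN2 : ‖N‖ ^ 2 ≤ 1 := pow_le_one₀ (norm_nonneg N) hN
  exact sum_mul_mul_le_sum_sq (fun j => ‖M j j‖) (fun j k => ‖N k j‖ ^ 2)
    (fun _ _ => by positivity) (fun j => (N.sum_norm_sq_col_le_l2_opNorm_sq j).trans hN2)
    (fun k => (N.sum_norm_sq_row_le_l2_opNorm_sq k).trans hN2)

theorem norm_sum_diagonal_resonance_le (A B : Matrix n n 𝕜) (hB : ‖B‖ ≤ 1) :
    ‖∑ j, ∑ k, Aᴴ j j * Bᴴ j k * A k k * B k j‖ ≤ ∑ j, ‖A j j‖ ^ 2 := by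
  refine (norm_sum_le _ _).trans <| (Finset.sum_le_sum fun j _ => norm_sum_le _ _).trans <|
    le_trans (le_of_eq ?_) (A.sum_norm_diag_mul_norm_sq_le B hB)
  refine Finset.sum_congr rfl fun j _ => Finset.sum_congr rfl fun k _ => ?_
  simp only [norm_mul, conjTranspose_apply, norm_star]
  ring

theorem norm_sum_exchange_resonance_le (A B : Matrix n n 𝕜) (hA : ‖A‖ ≤ 1) :
    ‖∑ j, ∑ k, if j ≠ k then Aᴴ j k * Bᴴ k k * A k j * B j j else 0‖ ≤ ∑ j, ‖B j j‖ ^ 2 := by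
  refine (norm_sum_le _ _).trans <| (Finset.sum_le_sum fun j _ => norm_sum_le _ _).trans <|
    le_trans (Finset.sum_le_sum fun j _ => Finset.sum_le_sum fun k _ => ?_)
      (B.sum_norm_diag_mul_norm_sq_le A hA)
  split_ifs
  · simp only [norm_mul, conjTranspose_apply, norm_star]
    exact le_of_eq (by ring)
  · rw [norm_zero]; positivity

theorem norm_otoc_resonance_le (A B : Matrix n n 𝕜) (hA : ‖A‖ ≤ 1) (hB : ‖B‖ ≤ 1) :
    ‖(1 / (Fintype.card n : 𝕜)) * ∑ j, ∑ k, Aᴴ j j * Bᴴ j k * A k k * B k j +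
        (1 / (Fintype.card n : 𝕜)) *
          ∑ j, ∑ k, if j ≠ k then Aᴴ j k * Bᴴ k k * A k j * B j j else 0‖ ≤
      2 * √(max ((1 / (Fintype.card n : ℝ)) * ∑ j, ‖A j j‖ ^ 2)
        ((1 / (Fintype.card n : ℝ)) * ∑ j, ‖B j j‖ ^ 2)) := by
  have hcard : ‖1 / (Fintype.card n : 𝕜)‖ = 1 / (Fintype.card n : ℝ) := by simp
  calc _ ≤ (1 / (Fintype.card n : ℝ)) * ∑ j, ‖A j j‖ ^ 2 +
        (1 / (Fintype.card n : ℝ)) * ∑ j, ‖B j j‖ ^ 2 := by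
        refine (norm_add_le _ _).trans ?_
        rw [norm_mul, norm_mul, hcard]
        gcongr
        exacts [norm_sum_diagonal_resonance_le A B hB, norm_sum_exchange_resonance_le A B hA]
    _ ≤ _ := add_le_two_mul_sqrt_max (A.average_norm_sq_diag_le_one hA)
        (B.average_norm_sq_diag_le_one hB)

end L2OpNorm

/-- For `H = U diag(E) U†` with non-degenerate gaps and `‖A‖, ‖B‖ ≤ 1`, the late-time OTOC
(Cesàro average of `tr(A†(t) B† A(t) B)/D`) converges to
`(1/D) Σ_{j,k} (A†)_{jj}(B†)_{jk}A_{kk}B_{kj} + (1/D) Σ_{j≠k} (A†)_{jk}(B†)_{kk}A_{kj}B_{jj}`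
(matrix elements in the eigenbasis), whose absolute value is at most
`2·max((1/D)Σ_j|A_{jj}|², (1/D)Σ_j|B_{jj}|²)^{1/2}`. -/
theorem statement17 {D : ℕ} (H A B : Matrix (Fin D) (Fin D) ℂ)
    (U : Matrix.unitaryGroup (Fin D) ℂ) (E : Fin D → ℝ)
    (hH : H = (U : Matrix (Fin D) (Fin D) ℂ) * Matrix.diagonal (fun j => (E j : ℂ)) *
      star (U : Matrix (Fin D) (Fin D) ℂ))
    (hgap : ∀ j k j' k' : Fin D, j ≠ k → E j - E k = E j' - E k' → j = j' ∧ k = k')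
    (hA : ‖Matrix.toEuclideanCLM (𝕜 := ℂ) A‖ ≤ 1)
    (hB : ‖Matrix.toEuclideanCLM (𝕜 := ℂ) B‖ ≤ 1) :
    Tendsto (fun τ : ℝ => (τ : ℂ)⁻¹ * ∫ t in (0:ℝ)..τ,
        ((NormedSpace.exp ((Complex.I * (t : ℂ)) • H) * Aᴴ *
            NormedSpace.exp ((-(Complex.I * (t : ℂ))) • H) * Bᴴ *
          (NormedSpace.exp ((Complex.I * (t : ℂ)) • H) * A *
            NormedSpace.exp ((-(Complex.I * (t : ℂ))) • H)) * B).trace) / (D : ℂ))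
      atTop
      (nhds ((1 / (D : ℂ)) * ∑ j, ∑ k,
          ((star (U : Matrix (Fin D) (Fin D) ℂ) * A * (U : Matrix (Fin D) (Fin D) ℂ))ᴴ j j) *
          ((star (U : Matrix (Fin D) (Fin D) ℂ) * B * (U : Matrix (Fin D) (Fin D) ℂ))ᴴ j k) *
          ((star (U : Matrix (Fin D) (Fin D) ℂ) * A * (U : Matrix (Fin D) (Fin D) ℂ)) k k) *
          ((star (U : Matrix (Fin D) (Fin D) ℂ) * B * (U : Matrix (Fin D) (Fin D) ℂ)) k j) +
        (1 / (D : ℂ)) * ∑ j, ∑ k, (if j ≠ k then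
          ((star (U : Matrix (Fin D) (Fin D) ℂ) * A * (U : Matrix (Fin D) (Fin D) ℂ))ᴴ j k) *
          ((star (U : Matrix (Fin D) (Fin D) ℂ) * B * (U : Matrix (Fin D) (Fin D) ℂ))ᴴ k k) *
          ((star (U : Matrix (Fin D) (Fin D) ℂ) * A * (U : Matrix (Fin D) (Fin D) ℂ)) k j) *
          ((star (U : Matrix (Fin D) (Fin D) ℂ) * B * (U : Matrix (Fin D) (Fin D) ℂ)) j j)
          else 0))) ∧
    Norm.norm ((1 / (D : ℂ)) * ∑ j, ∑ k,
          ((star (U : Matrix (Fin D) (Fin D) ℂ) * A * (U : Matrix (Fin D) (Fin D) ℂ))ᴴ j j) *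
          ((star (U : Matrix (Fin D) (Fin D) ℂ) * B * (U : Matrix (Fin D) (Fin D) ℂ))ᴴ j k) *
          ((star (U : Matrix (Fin D) (Fin D) ℂ) * A * (U : Matrix (Fin D) (Fin D) ℂ)) k k) *
          ((star (U : Matrix (Fin D) (Fin D) ℂ) * B * (U : Matrix (Fin D) (Fin D) ℂ)) k j) +
        (1 / (D : ℂ)) * ∑ j, ∑ k, (if j ≠ k then
          ((star (U : Matrix (Fin D) (Fin D) ℂ) * A * (U : Matrix (Fin D) (Fin D) ℂ))ᴴ j k) *
          ((star (U : Matrix (Fin D) (Fin D) ℂ) * B * (U : Matrix (Fin D) (Fin D) ℂ))ᴴ k k) *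
          ((star (U : Matrix (Fin D) (Fin D) ℂ) * A * (U : Matrix (Fin D) (Fin D) ℂ)) k j) *
          ((star (U : Matrix (Fin D) (Fin D) ℂ) * B * (U : Matrix (Fin D) (Fin D) ℂ)) j j)
          else 0))
      ≤ 2 * Real.sqrt (max
          ((1 / (D : ℝ)) * ∑ j, Norm.norm
            ((star (U : Matrix (Fin D) (Fin D) ℂ) * A * (U : Matrix (Fin D) (Fin D) ℂ)) j j) ^ 2)
          ((1 / (D : ℝ)) * ∑ j, Norm.norm
            ((star (U : Matrix (Fin D) (Fin D) ℂ) * B * (U : Matrix (Fin D) (Fin D) ℂ)) j j) ^ 2)) := by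
  subst hH
  -- `‖toEuclideanCLM A‖` is definitionally the L2 operator norm `‖A‖` (`Matrix.cstar_norm_def`).
  have hA' := (l2_opNorm_star_mul_mul_unitary U A).trans_le hA
  have hB' := (l2_opNorm_star_mul_mul_unitary U B).trans_le hB
  refine ⟨?_, ?_⟩
  · convert (tendsto_cesaro_trace_otoc U hgap A B).div_const (D : ℂ) using 1
    · ext τ
      rw [intervalIntegral.integral_div, mul_div_assoc]
    · rw [add_div, one_div_mul_eq_div, one_div_mul_eq_div]
  · have h := norm_otoc_resonance_le _ _ hA' hB'
    rwa [Fintype.card_fin] at h
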